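/- arXiv:2511.14609 — 2 statements merged into one kernel-verified Lean document; each statement's English description precedes it below -/
import Mathlib

section
/- Let k, η, l ∈ ℝ with k ≠ 0, and let μ > 0. Define f̂(t) = exp(−μ ∫₀ᵗ (k² + (η − kτ)² + l²) dτ) · f̂_in for a constant f̂_in ∈ ℂ. Then |f̂(t)| ≤ exp(−(1/12)·μ·k²·t³) · |f̂_in| for all t ≥ 0. -/
/-!
Completing the square in `η`,
`∫₀ᵗ (η - kτ)² dτ = t (η - kt/2)² + k²t³/12`, so the exponent
`μ ∫₀ᵗ (k² + (η - kτ)² + l²) dτ` is at least `μk²t³/12` whatever the values of `η` and `l`.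
-/

theorem integral_sub_mul_sq (η k t : ℝ) :
    ∫ τ in (0:ℝ)..t, (η - k * τ) ^ 2 = t * (η - k * t / 2) ^ 2 + k ^ 2 * t ^ 3 / 12 := by
  have hexpand : ∀ τ : ℝ, (η - k * τ) ^ 2 = η ^ 2 - 2 * η * k * τ + k ^ 2 * τ ^ 2 := fun τ => by
    ring
  simp only [hexpand]
  rw [intervalIntegral.integral_add, intervalIntegral.integral_sub,
    intervalIntegral.integral_const_mul, intervalIntegral.integral_const_mul, integral_id,
    integral_pow, intervalIntegral.integral_const, smul_eq_mul]
  · ring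
  all_goals exact (by fun_prop : Continuous _).intervalIntegrable _ _

theorem integral_sq_add_sub_mul_sq_add_sq (k η l t : ℝ) :
    ∫ τ in (0:ℝ)..t, (k ^ 2 + (η - k * τ) ^ 2 + l ^ 2) =
      (k ^ 2 + l ^ 2) * t + ∫ τ in (0:ℝ)..t, (η - k * τ) ^ 2 := by
  rw [intervalIntegral.integral_add, intervalIntegral.integral_add]
  · simp only [intervalIntegral.integral_const, smul_eq_mul, sub_zero]
    ring
  all_goals exact (by fun_prop : Continuous _).intervalIntegrable _ _

theorem cube_div_twelve_le_integral_sq_add_sub_mul_sq_add_sq (k η l : ℝ) {t : ℝ} (ht : 0 ≤ t) :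
    k ^ 2 * t ^ 3 / 12 ≤ ∫ τ in (0:ℝ)..t, (k ^ 2 + (η - k * τ) ^ 2 + l ^ 2) := by
  rw [integral_sq_add_sub_mul_sq_add_sq, integral_sub_mul_sq]
  have : 0 ≤ (k ^ 2 + l ^ 2) * t + t * (η - k * t / 2) ^ 2 := by positivity
  linarith

theorem stmt1_general (k η l μ : ℝ) (hμ : 0 < μ) (fin : ℂ) (fhat : ℝ → ℂ)
    (hf : ∀ t : ℝ, fhat t =
      (Real.exp (-μ * ∫ τ in (0:ℝ)..t, (k ^ 2 + (η - k * τ) ^ 2 + l ^ 2))) • fin) :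
    ∀ t : ℝ, 0 ≤ t →
      ‖fhat t‖ ≤ Real.exp (-(1 / 12) * μ * k ^ 2 * t ^ 3) * ‖fin‖ := by
  intro t ht
  rw [hf t, norm_smul_of_nonneg (Real.exp_pos _).le]
  gcongr ?_ * _
  rw [Real.exp_le_exp]
  have := cube_div_twelve_le_integral_sq_add_sub_mul_sq_add_sq k η l ht
  nlinarith

/-- The Fourier mode solution of the advection–diffusion equation along Couette
characteristics decays at enhanced dissipation rate `exp(−μk²t³/12)`. -/
theorem stmt1 (k η l μ : ℝ) (hk : k ≠ 0) (hμ : 0 < μ) (fin : ℂ) (fhat : ℝ → ℂ)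
    (hf : ∀ t : ℝ, fhat t =
      (Real.exp (-μ * ∫ τ in (0:ℝ)..t, (k ^ 2 + (η - k * τ) ^ 2 + l ^ 2))) • fin) :
    ∀ t : ℝ, 0 ≤ t →
      ‖fhat t‖ ≤ Real.exp (-(1 / 12) * μ * k ^ 2 * t ^ 3) * ‖fin‖ :=
  stmt1_general k η l μ hμ fin fhat hf
end

section
/- Define m(t) at fixed Fourier mode (k, l) ∈ ℤ² and η ∈ ℝ by m(t,k,η,l) = exp(C₀·∫_{−∞}^t Σ_{(i,j) ∈ ℤ², j ≠ 0} j²/(j² + (η − jτ)² + i²) · ⟨(j−k, i−l)⟩^(−4) dτ) with C₀ > 0. Then m is well defined and uniformly bounded: there is a constant K (depending only on C₀) such that 1 ≤ m(t,k,η,l) ≤ K for all t ∈ ℝ, (k,l) ∈ ℤ², η ∈ ℝ. -/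
/-!
For `j ≠ 0` the identity `j² (1 + (τ - η/j)²) = j² + (η - jτ)²` bounds the `(i, j)` summand of the
kernel by `⟨(j - k, i - l)⟩⁻⁴ (1 + (τ - η/j)²)⁻¹`, a translated Lorentzian of total integral `π`.
Interchanging sum and integral, the kernel is integrable on `ℝ` with integral at most
`π ∑ₚ ⟨p⟩⁻⁴`, which does not depend on `(k, l, η)` because the sum is translation invariant.
The kernel is nonnegative, so `1 ≤ m ≤ exp (C₀ π ∑ₚ ⟨p⟩⁻⁴)`.
-/

/-- The resonance kernel appearing in the definition of the weight `m`. -/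
noncomputable def mKernel (k l : ℤ) (η τ : ℝ) : ℝ :=
  ∑' p : ℤ × ℤ,
    if p.2 ≠ 0 then
      (p.2:ℝ) ^ 2 /
        (((p.2:ℝ) ^ 2 + (η - (p.2:ℝ) * τ) ^ 2 + (p.1:ℝ) ^ 2) *
          (1 + ((p.2 - k : ℤ):ℝ) ^ 2 + ((p.1 - l : ℤ):ℝ) ^ 2) ^ 2)
    else 0

/-- The main weight `m`. -/
noncomputable def mWeight (C₀ t : ℝ) (k l : ℤ) (η : ℝ) : ℝ :=
  Real.exp (C₀ * ∫ τ in Set.Iic t, mKernel k l η τ)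

open MeasureTheory Real Filter

theorem MeasureTheory.Integrable.tsum_of_summable_integral_norm {α E ι : Type*}
    [MeasurableSpace α] {μ : Measure α} [NormedAddCommGroup E] [Countable ι] {F : ι → α → E}
    (hF_int : ∀ i, Integrable (F i) μ) (hF_sum : Summable fun i ↦ ∫ a, ‖F i a‖ ∂μ)
    (hF_meas : AEStronglyMeasurable (fun a ↦ ∑' i, F i a) μ) :
    Integrable (fun a ↦ ∑' i, F i a) μ := by
  refine ⟨hF_meas, ?_⟩
  calc ∫⁻ a, ‖∑' i, F i a‖ₑ ∂μ ≤ ∫⁻ a, ∑' i, ‖F i a‖ₑ ∂μ :=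
        lintegral_mono fun _ ↦ enorm_tsum_le_tsum_enorm
    _ = ∑' i, ∫⁻ a, ‖F i a‖ₑ ∂μ := lintegral_tsum fun i ↦ (hF_int i).1.enorm
    _ = ∑' i, ENNReal.ofReal (∫ a, ‖F i a‖ ∂μ) := by
        simp_rw [ofReal_integral_norm_eq_lintegral_enorm (hF_int _)]
    _ < ⊤ := by
        rw [← ENNReal.ofReal_tsum_of_nonneg (fun i ↦ integral_nonneg fun _ ↦ norm_nonneg _) hF_sum]
        exact ENNReal.ofReal_lt_top

theorem summable_inv_one_add_sq_int : Summable fun n : ℤ ↦ (1 + (n : ℝ) ^ 2)⁻¹ := by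
  refine (Real.summable_one_div_int_pow.2 one_lt_two).of_norm_bounded_eventually ?_
  filter_upwards [eventually_cofinite_ne 0] with n hn
  rw [norm_of_nonneg (by positivity), one_div]
  have : (n : ℝ) ≠ 0 := Int.cast_ne_zero.2 hn
  exact inv_anti₀ (by positivity) (le_add_of_nonneg_left zero_le_one)

/-- `⟨p⟩⁻⁴`, where `⟨(a, b)⟩² = 1 + a² + b²`. -/
noncomputable def bracketWeight (p : ℤ × ℤ) : ℝ := ((1 + (p.2 : ℝ) ^ 2 + (p.1 : ℝ) ^ 2) ^ 2)⁻¹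

theorem bracketWeight_pos (p : ℤ × ℤ) : 0 < bracketWeight p := by
  unfold bracketWeight; positivity

theorem bracketWeight_le_mul (p : ℤ × ℤ) :
    bracketWeight p ≤ (1 + (p.1 : ℝ) ^ 2)⁻¹ * (1 + (p.2 : ℝ) ^ 2)⁻¹ := by
  rw [bracketWeight, ← mul_inv]
  exact inv_anti₀ (by positivity) (by nlinarith [sq_nonneg ((p.1 : ℝ) * p.2)])

theorem summable_bracketWeight : Summable bracketWeight :=
  (summable_inv_one_add_sq_int.mul_of_nonneg summable_inv_one_add_sq_int
    (fun _ ↦ by positivity) (fun _ ↦ by positivity)).of_nonneg_of_le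
    (fun p ↦ (bracketWeight_pos p).le) bracketWeight_le_mul

theorem summable_bracketWeight_sub (q : ℤ × ℤ) : Summable fun p ↦ bracketWeight (p - q) :=
  (Equiv.subRight q).summable_iff.2 summable_bracketWeight

theorem tsum_bracketWeight_sub (q : ℤ × ℤ) : ∑' p, bracketWeight (p - q) = ∑' p, bracketWeight p :=
  (Equiv.subRight q).tsum_eq bracketWeight

noncomputable def mKernelTerm (k l : ℤ) (η : ℝ) (p : ℤ × ℤ) (τ : ℝ) : ℝ :=
  if p.2 ≠ 0 then
    (p.2:ℝ) ^ 2 /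
      (((p.2:ℝ) ^ 2 + (η - (p.2:ℝ) * τ) ^ 2 + (p.1:ℝ) ^ 2) *
        (1 + ((p.2 - k : ℤ):ℝ) ^ 2 + ((p.1 - l : ℤ):ℝ) ^ 2) ^ 2)
    else 0

theorem mKernel_eq_tsum (k l : ℤ) (η : ℝ) : mKernel k l η = fun τ ↦ ∑' p, mKernelTerm k l η p τ :=
  rfl

section
variable {k l : ℤ} {η : ℝ}

theorem mKernelTerm_nonneg (p : ℤ × ℤ) (τ : ℝ) : 0 ≤ mKernelTerm k l η p τ := by
  unfold mKernelTerm; split_ifs <;> positivity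

theorem mKernelTerm_continuous (p : ℤ × ℤ) : Continuous (mKernelTerm k l η p) := by
  unfold mKernelTerm
  split_ifs with hj
  · have : (p.2 : ℝ) ≠ 0 := Int.cast_ne_zero.2 hj
    exact continuous_const.div (by fun_prop) fun τ ↦ by positivity
  · exact continuous_const

theorem mKernelTerm_le_lorentzian (p : ℤ × ℤ) (τ : ℝ) :
    mKernelTerm k l η p τ ≤ bracketWeight (p - (l, k)) * (1 + (τ - η / p.2) ^ 2)⁻¹ := by
  unfold mKernelTerm
  split_ifs with hj
  · have hj' : (p.2 : ℝ) ≠ 0 := Int.cast_ne_zero.2 hj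
    have hlor : (p.2 : ℝ) ^ 2 * (1 + (τ - η / p.2) ^ 2) = (p.2 : ℝ) ^ 2 + (η - p.2 * τ) ^ 2 := by
      field_simp; ring
    have hW : bracketWeight (p - (l, k)) =
        ((1 + ((p.2 - k : ℤ) : ℝ) ^ 2 + ((p.1 - l : ℤ) : ℝ) ^ 2) ^ 2)⁻¹ := rfl
    rw [hW]
    calc _ ≤ (p.2 : ℝ) ^ 2 / (((p.2 : ℝ) ^ 2 * (1 + (τ - η / p.2) ^ 2)) *
            (1 + ((p.2 - k : ℤ) : ℝ) ^ 2 + ((p.1 - l : ℤ) : ℝ) ^ 2) ^ 2) := by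
          gcongr
          rw [hlor]
          exact le_add_of_nonneg_right (sq_nonneg _)
      _ = _ := by field_simp
  · exact mul_nonneg (bracketWeight_pos _).le (by positivity)

theorem mKernelTerm_le_bracketWeight (p : ℤ × ℤ) (τ : ℝ) :
    mKernelTerm k l η p τ ≤ bracketWeight (p - (l, k)) :=
  (mKernelTerm_le_lorentzian p τ).trans <| mul_le_of_le_one_right (bracketWeight_pos _).le <|
    inv_le_one_of_one_le₀ (le_add_of_nonneg_right (sq_nonneg _))

theorem norm_mKernelTerm (p : ℤ × ℤ) (τ : ℝ) : ‖mKernelTerm k l η p τ‖ = mKernelTerm k l η p τ :=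
  norm_of_nonneg (mKernelTerm_nonneg p τ)

theorem integrable_mKernelTerm (p : ℤ × ℤ) : Integrable (mKernelTerm k l η p) :=
  ((integrable_inv_one_add_sq.comp_sub_right (η / p.2)).const_mul _).mono'
    (mKernelTerm_continuous p).aestronglyMeasurable
    (Eventually.of_forall fun τ ↦
      (norm_mKernelTerm p τ).trans_le (mKernelTerm_le_lorentzian p τ))

theorem integral_mKernelTerm_le (p : ℤ × ℤ) :
    ∫ τ, mKernelTerm k l η p τ ≤ π * bracketWeight (p - (l, k)) :=
  calc ∫ τ, mKernelTerm k l η p τ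
      ≤ ∫ τ, bracketWeight (p - (l, k)) * (1 + (τ - η / p.2) ^ 2)⁻¹ :=
        integral_mono (integrable_mKernelTerm p)
          ((integrable_inv_one_add_sq.comp_sub_right (η / p.2)).const_mul _)
          (mKernelTerm_le_lorentzian p)
    _ = π * bracketWeight (p - (l, k)) := by
        rw [integral_const_mul, integral_sub_right_eq_self (fun x ↦ (1 + x ^ 2)⁻¹),
          integral_univ_inv_one_add_sq, mul_comm]

theorem summable_integral_mKernelTerm : Summable fun p ↦ ∫ τ, mKernelTerm k l η p τ :=
  ((summable_bracketWeight_sub (l, k)).mul_left π).of_nonneg_of_le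
    (fun p ↦ integral_nonneg (mKernelTerm_nonneg p)) integral_mKernelTerm_le

theorem mKernel_nonneg (τ : ℝ) : 0 ≤ mKernel k l η τ :=
  tsum_nonneg fun p ↦ mKernelTerm_nonneg p τ

theorem mKernel_continuous : Continuous (mKernel k l η) :=
  continuous_tsum mKernelTerm_continuous (summable_bracketWeight_sub (l, k)) fun p τ ↦
    (norm_mKernelTerm p τ).trans_le (mKernelTerm_le_bracketWeight p τ)

theorem integrable_mKernel : Integrable (mKernel k l η) := by
  rw [mKernel_eq_tsum]
  exact Integrable.tsum_of_summable_integral_norm integrable_mKernelTerm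
    (by simpa only [norm_mKernelTerm] using summable_integral_mKernelTerm)
    mKernel_continuous.aestronglyMeasurable

theorem integral_mKernel_le : ∫ τ, mKernel k l η τ ≤ π * ∑' p, bracketWeight p := by
  rw [← tsum_bracketWeight_sub (l, k), ← tsum_mul_left, mKernel_eq_tsum,
    ← integral_tsum_of_summable_integral_norm integrable_mKernelTerm
    (by simpa only [norm_mKernelTerm] using summable_integral_mKernelTerm)]
  exact summable_integral_mKernelTerm.tsum_le_tsum integral_mKernelTerm_le
    ((summable_bracketWeight_sub (l, k)).mul_left π)

end

/-- Lemma A.2 (boundedness of `m`): the weight `m` is well defined (the kernel is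
integrable on `(−∞,t]`) and satisfies `1 ≤ m ≤ K` with `K` depending only on `C₀`. -/
theorem stmt15 (C₀ : ℝ) (hC₀ : 0 < C₀) :
    ∃ K : ℝ, ∀ (t : ℝ) (k l : ℤ) (η : ℝ),
      MeasureTheory.IntegrableOn (fun τ : ℝ => mKernel k l η τ) (Set.Iic t) ∧
      1 ≤ mWeight C₀ t k l η ∧ mWeight C₀ t k l η ≤ K := by
  refine ⟨exp (C₀ * (π * ∑' p, bracketWeight p)), fun t k l η ↦
    ⟨integrable_mKernel.integrableOn, one_le_exp ?_, exp_le_exp.2 ?_⟩⟩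
  · exact mul_nonneg hC₀.le (setIntegral_nonneg measurableSet_Iic fun τ _ ↦ mKernel_nonneg τ)
  · refine mul_le_mul_of_nonneg_left ?_ hC₀.le
    exact (setIntegral_le_integral integrable_mKernel (Eventually.of_forall mKernel_nonneg)).trans
      integral_mKernel_le
end
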